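/- In the good/bad/ugly setting, for every i with 0 ≤ i ≤ m one has Π_bad A^i = Π_bad ugly^i, and consequently ‖Π_bad A^i‖ ≤ ‖ugly^i‖. -/

import Mathlib

/-! Each gate step splits the transported good part into its good and bad components, and the
ugly part accumulates the bad components transported by the later gates; hence
`A i = good i + ugly i`, while `good i` is killed by `Π_bad`. The norm bound is then the
contractivity of an orthogonal projection. -/

theorem LinearMap.IsSymmetricProjection.norm_apply_le {𝕜 E : Type*} [RCLike 𝕜]
    [NormedAddCommGroup E] [InnerProductSpace 𝕜 E] {p : E →ₗ[𝕜] E}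
    (hp : p.IsSymmetricProjection) (x : E) : ‖p x‖ ≤ ‖x‖ := by
  obtain ⟨_, hp_eq⟩ := p.isSymmetricProjection_iff_eq_coe_starProjection_range.mp hp
  rw [hp_eq]
  exact Submodule.norm_starProjection_apply_le _ x

section GoodBadUgly

variable {R M : Type*} [Ring R] [AddCommGroup M] [Module R M]
  (m : ℕ) (C : ℕ → M →ₗ[R] M) (P : M →ₗ[R] M) (A good ugly : ℕ → M)

theorem eq_good_add_ugly (h0 : A 0 = good 0 + ugly 0)
    (hA : ∀ i : ℕ, 1 ≤ i → i ≤ m → A i = C i (A (i - 1)))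
    (hgood : ∀ i : ℕ, 1 ≤ i → i ≤ m →
      good i = C i (good (i - 1)) - P (C i (good (i - 1))))
    (hugly : ∀ i : ℕ, 1 ≤ i → i ≤ m →
      ugly i = P (C i (good (i - 1))) + C i (ugly (i - 1))) :
    ∀ i : ℕ, i ≤ m → A i = good i + ugly i := by
  intro i
  induction i with
  | zero => exact fun _ => h0
  | succ n ih =>
    intro hn
    have h1 : 1 ≤ n + 1 := Nat.le_add_left 1 n
    rw [hA _ h1 hn, hgood _ h1 hn, hugly _ h1 hn, Nat.add_sub_cancel, ih (by omega), map_add]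
    abel

theorem proj_good_eq_zero (hPidem : ∀ x : M, P (P x) = P x) (h0 : P (good 0) = 0)
    (hgood : ∀ i : ℕ, 1 ≤ i → i ≤ m →
      good i = C i (good (i - 1)) - P (C i (good (i - 1)))) :
    ∀ i : ℕ, i ≤ m → P (good i) = 0
  | 0, _ => h0
  | i + 1, hi => by rw [hgood _ (Nat.le_add_left 1 i) hi, map_sub, hPidem, sub_self]

end GoodBadUgly

theorem welded_tree_proj_bad_A_eq_proj_bad_ugly
    {{H : Type*}} [NormedAddCommGroup H] [InnerProductSpace ℂ H]
    (m : ℕ) (C : ℕ → (H ≃ₗᵢ[ℂ] H))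
    (P : H →L[ℂ] H)
    (hPidem : ∀ x : H, P (P x) = P x)
    (hPsa : ∀ x y : H, (inner ℂ (P x) y : ℂ) = inner ℂ x (P y))
    (ψ0 : H) (hψ0 : ‖ψ0‖ = 1) (hψ0bad : P ψ0 = 0)
    (A good bad ugly : ℕ → H)
    (hA0 : A 0 = ψ0)
    (hA : ∀ i : ℕ, 1 ≤ i → i ≤ m → A i = C i (A (i - 1)))
    (hgood0 : good 0 = ψ0) (hbad0 : bad 0 = 0) (hugly0 : ugly 0 = 0)
    (hgood : ∀ i : ℕ, 1 ≤ i → i ≤ m →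
      good i = C i (good (i - 1)) - P (C i (good (i - 1))))
    (hbad : ∀ i : ℕ, 1 ≤ i → i ≤ m → bad i = P (C i (good (i - 1))))
    (hugly : ∀ i : ℕ, 1 ≤ i → i ≤ m → ugly i = bad i + C i (ugly (i - 1))) :
    ∀ i : ℕ, i ≤ m →
      P (A i) = P (ugly i) ∧ ‖P (A i)‖ ≤ ‖ugly i‖ := by
  intro i hi
  have hP : (P : H →ₗ[ℂ] H).IsSymmetricProjection := ⟨LinearMap.ext hPidem, hPsa⟩
  have hugly_unfolded : ∀ i, 1 ≤ i → i ≤ m →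
      ugly i = P (C i (good (i - 1))) + C i (ugly (i - 1)) :=
    fun i h1 hi => by rw [hugly i h1 hi, hbad i h1 hi]
  have hsplit := eq_good_add_ugly m (fun i => (C i : H →ₗ[ℂ] H)) P A good ugly
    (by rw [hA0, hgood0, hugly0, add_zero]) hA hgood hugly_unfolded i hi
  have hgood_bad : P (good i) = 0 := proj_good_eq_zero m (fun i => (C i : H →ₗ[ℂ] H))
    (P : H →ₗ[ℂ] H) good hPidem (hgood0 ▸ hψ0bad) hgood i hi
  have hproj : P (A i) = P (ugly i) := by rw [hsplit, map_add, hgood_bad, zero_add]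
  exact ⟨hproj, hproj ▸ hP.norm_apply_le (ugly i)⟩
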